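/- Let y(x) ∈ 1 + x²ℚ[r][[x²]] be the unique power series solving Σ_{i=0}^{⌊r/2⌋} binom(r+1,2i+1) x^{2i} y^{r−2i} = r+1, and define y₁ = ((y+x)^{r+1} + (y−x)^{r+1})/(2(r+1)). Then the differential identity x·y₁′ − (r+1)·y₁ = (r+1)·x·y′ − y holds, where ′ denotes d/dx. Equivalently, writing y = Σ_g ã_g(r)(2x)^{2g}, the coefficient of (2x)^{2g} in y₁ equals ((2(r+1)g − 1)/(2g − r − 1))·ã_g(r) whenever 2g ≠ r+1. -/

import Mathlib

/-- `isSol r y` says that `y ∈ 1 + x²ℚ[[x²]]` and `y` solves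
`Σ_{i=0}^{⌊r/2⌋} binom(r+1, 2i+1) x^{2i} y^{r-2i} = r+1`. -/
def isSol (r : ℕ) (y : PowerSeries ℚ) : Prop :=
  PowerSeries.coeff 0 y = 1 ∧ (∀ n : ℕ, Odd n → PowerSeries.coeff n y = 0) ∧
    ∑ i ∈ Finset.range (r / 2 + 1),
        PowerSeries.C (Nat.choose (r + 1) (2 * i + 1) : ℚ) * PowerSeries.X ^ (2 * i)
          * y ^ (r - 2 * i)
      = PowerSeries.C ((r : ℚ) + 1)

/-- The second algebraic series `y₁ = ((y+x)^{r+1} + (y-x)^{r+1})/(2(r+1))`. -/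
noncomputable def yOne (r : ℕ) (y : PowerSeries ℚ) : PowerSeries ℚ :=
  PowerSeries.C (2 * ((r : ℚ) + 1))⁻¹ *
    ((y + PowerSeries.X) ^ (r + 1) + (y - PowerSeries.X) ^ (r + 1))

/-- The formal derivative `d/dx` of a power series. -/
noncomputable def psDeriv (f : PowerSeries ℚ) : PowerSeries ℚ :=
  PowerSeries.mk fun n => ((n : ℚ) + 1) * PowerSeries.coeff (n + 1) f

/-! The defining equation of `y` is the odd part of a binomial expansion: it says exactly
`(y + x)^(r+1) - (y - x)^(r+1) = 2(r+1)x`. Differentiating this relation once and eliminating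
with it yields the differential identity for `y₁`, in any ring with a derivation `d` such that
`d x = 1`. Since `x d/dx` multiplies `x^n` by `n`, comparing coefficients of `x^(2g)` in the
identity gives the second claim. -/

open Finset PowerSeries

theorem Finset.sum_range_eq_sum_odd_of_even {M : Type*} [AddCommMonoid M] (f : ℕ → M)
    (hf : ∀ j, Even j → f j = 0) (N : ℕ) :
    ∑ j ∈ range N, f j = ∑ i ∈ range (N / 2), f (2 * i + 1) := by
  induction N with
  | zero => simp
  | succ N ih =>
    rw [sum_range_succ, ih]
    rcases Nat.even_or_odd N with ⟨k, rfl⟩ | ⟨k, rfl⟩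
    · rw [hf _ ⟨k, rfl⟩, add_zero, show (k + k + 1) / 2 = (k + k) / 2 by omega]
    · rw [show (2 * k + 1 + 1) / 2 = (2 * k + 1) / 2 + 1 by omega, sum_range_succ,
        show (2 * k + 1) / 2 = k by omega]

theorem add_pow_succ_sub_sub_pow_succ {R : Type*} [CommRing R] (a b : R) (n : ℕ) :
    (a + b) ^ (n + 1) - (a - b) ^ (n + 1) =
      2 * b * ∑ i ∈ range (n / 2 + 1),
        (n + 1).choose (2 * i + 1) * b ^ (2 * i) * a ^ (n - 2 * i) := by
  rw [add_comm a b, sub_eq_neg_add a b, add_pow, add_pow, ← sum_sub_distrib,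
    sum_range_eq_sum_odd_of_even _ (fun j hj => by rw [hj.neg_pow, sub_self]),
    show (n + 1 + 1) / 2 = n / 2 + 1 by omega, mul_sum]
  refine sum_congr rfl fun i _ => ?_
  rw [(odd_two_mul_add_one i).neg_pow, Nat.add_sub_add_right]
  ring

theorem Derivation.mul_apply_sub_of_add_pow_sub_sub_pow {R A : Type*} [CommRing R] [CommRing A]
    [Algebra R A] (D : Derivation R A A) {x y : A} (hx : D x = 1) {n : ℕ}
    (h : (y + x) ^ (n + 1) - (y - x) ^ (n + 1) = 2 * (n + 1) * x) :
    x * D ((y + x) ^ (n + 1) + (y - x) ^ (n + 1))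
        - (n + 1) * ((y + x) ^ (n + 1) + (y - x) ^ (n + 1))
      = 2 * (n + 1) * ((n + 1) * x * D y - y) := by
  have hpow (z : A) : D (z ^ (n + 1)) = (n + 1) * z ^ n * D z := by
    rw [leibniz_pow, Nat.add_sub_cancel, nsmul_eq_mul, smul_eq_mul]
    push_cast
    ring
  have hconst : D (2 * (n + 1) : A) = 0 := by
    rw [show (2 * (n + 1) : A) = ((2 * (n + 1) : ℕ) : A) by push_cast; ring]
    exact D.map_natCast _
  have hD : (n + 1) * (y + x) ^ n * (D y + 1) - (n + 1) * (y - x) ^ n * (D y - 1)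
      = 2 * (n + 1) := by
    have := congrArg D h
    rwa [map_sub, hpow, hpow, leibniz, map_add, map_sub, hx, hconst, smul_zero, add_zero,
      smul_eq_mul, mul_one] at this
  rw [map_add, hpow, hpow, map_add, map_sub, hx]
  linear_combination (-y) * hD + (n + 1) * D y * h

theorem psDeriv_eq_derivative (f : ℚ⟦X⟧) : psDeriv f = derivative ℚ f := by
  ext n
  rw [psDeriv, coeff_mk, coeff_derivative, mul_comm]

theorem coeff_X_mul_psDeriv (f : ℚ⟦X⟧) (n : ℕ) :
    coeff n (X * psDeriv f) = n * coeff n f := by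
  cases n with
  | zero => simp
  | succ n => rw [coeff_succ_X_mul, psDeriv, coeff_mk, Nat.cast_succ]

theorem isSol.add_pow_sub_sub_pow {r : ℕ} {y : ℚ⟦X⟧} (hy : isSol r y) :
    (y + X) ^ (r + 1) - (y - X) ^ (r + 1) = 2 * ((r : ℚ⟦X⟧) + 1) * X := by
  have h := hy.2.2
  simp only [map_natCast, map_add, map_one] at h
  rw [add_pow_succ_sub_sub_pow_succ, h]
  ring

theorem isSol.X_mul_psDeriv_yOne_sub {r : ℕ} {y : ℚ⟦X⟧} (hy : isSol r y) :
    X * psDeriv (yOne r y) - C ((r : ℚ) + 1) * yOne r y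
      = C ((r : ℚ) + 1) * X * psDeriv y - y := by
  have key := (derivative ℚ).mul_apply_sub_of_add_pow_sub_sub_pow derivative_X
    hy.add_pow_sub_sub_pow
  have hC : C ((r : ℚ) + 1) = (r : ℚ⟦X⟧) + 1 := by simp
  have hC2 : C (2 * ((r : ℚ) + 1)) = 2 * ((r : ℚ⟦X⟧) + 1) := by rw [map_mul, hC, map_ofNat]
  have hinv : C (2 * ((r : ℚ) + 1))⁻¹ * (2 * (r + 1)) = 1 := by
    rw [← hC2, ← map_mul, inv_mul_cancel₀ (by positivity), map_one]
  rw [psDeriv_eq_derivative, psDeriv_eq_derivative, yOne, ← smul_eq_C_mul, Derivation.map_smul,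
    smul_eq_C_mul, smul_eq_C_mul, hC]
  linear_combination C (2 * ((r : ℚ) + 1))⁻¹ * key + ((r + 1) * X * derivative ℚ y - y) * hinv

theorem stmt10_general (r : ℕ) (y : PowerSeries ℚ) (hy : isSol r y) :
    (PowerSeries.X * psDeriv (yOne r y) - PowerSeries.C ((r : ℚ) + 1) * yOne r y
        = PowerSeries.C ((r : ℚ) + 1) * PowerSeries.X * psDeriv y - y) ∧
    ∀ g : ℕ, 2 * g ≠ r + 1 →
      PowerSeries.coeff (2 * g) (yOne r y)
        = ((2 * ((r : ℚ) + 1) * (g : ℚ) - 1) / (2 * (g : ℚ) - (r : ℚ) - 1)) *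
            PowerSeries.coeff (2 * g) y := by
  refine ⟨hy.X_mul_psDeriv_yOne_sub, fun g hg => ?_⟩
  have hc := congrArg (coeff (2 * g)) hy.X_mul_psDeriv_yOne_sub
  rw [map_sub, map_sub, coeff_X_mul_psDeriv, coeff_C_mul, mul_assoc, coeff_C_mul,
    coeff_X_mul_psDeriv] at hc
  have hd : 2 * (g : ℚ) - r - 1 ≠ 0 := by
    rw [sub_sub, sub_ne_zero]
    exact_mod_cast hg
  rw [div_mul_eq_mul_div, eq_div_iff hd]
  push_cast at hc
  linear_combination hc

/-- For `y` the solution of `Σ binom(r+1,2i+1)x^{2i}y^{r-2i} = r+1` and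
`y₁ = ((y+x)^{r+1}+(y-x)^{r+1})/(2(r+1))`, the differential identity
`x·y₁′ - (r+1)·y₁ = (r+1)·x·y′ - y` holds; equivalently, writing `y = Σ ã_g(r)(2x)^{2g}`,
the coefficient of `(2x)^{2g}` in `y₁` equals `((2(r+1)g-1)/(2g-r-1))·ã_g(r)` whenever
`2g ≠ r+1`. -/
theorem stmt10 (r : ℕ) (hr : 2 ≤ r) (y : PowerSeries ℚ) (hy : isSol r y) :
    (PowerSeries.X * psDeriv (yOne r y) - PowerSeries.C ((r : ℚ) + 1) * yOne r y
        = PowerSeries.C ((r : ℚ) + 1) * PowerSeries.X * psDeriv y - y) ∧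
    ∀ g : ℕ, 2 * g ≠ r + 1 →
      PowerSeries.coeff (2 * g) (yOne r y)
        = ((2 * ((r : ℚ) + 1) * (g : ℚ) - 1) / (2 * (g : ℚ) - (r : ℚ) - 1)) *
            PowerSeries.coeff (2 * g) y :=
  stmt10_general r y hy
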